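/- Let K be a field, q ∈ K[x_1] nonconstant, and R_q = K[x_1]/⟨q⟩. Let f, g ∈ R_q[x_2,...,x_n] with f not in R_q and g not in R_q nor a unit multiple of an element of R_q^×, whose leading monomials lm(f), lm(g) (with respect to a monomial ordering on monomials in x_2,...,x_n) are relatively prime. With l_f, l_g ∈ K[x_1] the canonical lifts of lc(f), lc(g) (of degree < deg q), d = gcd(l_f, l_g), m_f = σ_q(lcm(l_f,l_g)/l_f), m_g = σ_q(lcm(l_f,l_g)/l_g), and S(f,g) := (m_f·x̃^γ/lm(f))·f − (m_g·x̃^γ/lm(g))·g with x̃^γ = lcm(lm(f),lm(g)), one has σ_q(d)·S(f,g) = f_1·lt(g) − g_1·lt(f) = f_1·g − g_1·f, where f_1 = f − lt(f) and g_1 = g − lt(g). -/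

import Mathlib

/-!
The lifts `l_f, l_g` of leading coefficients of nonzero polynomials are nonzero, so
cancelling them in `d · M = l_f · l_g` gives `d · u_f = l_g` and `d · u_g = l_f`. Hence
multiplying the S-polynomial by `σ_q(d)` turns its coefficients into `lc(g)` and `lc(f)`:
`σ_q(d) · S(f,g) = lt(g) · f - lt(f) · g`. Both right-hand sides equal this, because the
products `lt(f) · lt(g)` and `f · g` cancel.
-/

open MvPolynomial

/-- The leading monomial (exponent) of `f` with respect to the monomial order `m`,
taken over the coefficient ring. -/
noncomputable def mdeg {σ : Type*} (m : MonomialOrder σ) {R : Type*} [CommSemiring R]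
    (f : MvPolynomial σ R) : σ →₀ ℕ :=
  m.toSyn.symm (f.support.sup fun d => m.toSyn d)

/-- The leading coefficient of `f` with respect to the monomial order `m`. -/
noncomputable def lC {σ : Type*} (m : MonomialOrder σ) {R : Type*} [CommSemiring R]
    (f : MvPolynomial σ R) : R :=
  f.coeff (mdeg m f)

/-- The leading term of `f` with respect to the monomial order `m`. -/
noncomputable def lT {σ : Type*} (m : MonomialOrder σ) {R : Type*} [CommSemiring R]
    (f : MvPolynomial σ R) : MvPolynomial σ R :=
  monomial (mdeg m f) (lC m f)

/-- `d` is a greatest common divisor of `a` and `b` (gcd's are unique up to units). -/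
def IsGcd {α : Type*} [CommMonoid α] (d a b : α) : Prop :=
  d ∣ a ∧ d ∣ b ∧ ∀ e, e ∣ a → e ∣ b → e ∣ d

/-- `l` is a least common multiple of `a` and `b` (lcm's are unique up to units). -/
def IsLcm {α : Type*} [CommMonoid α] (l a b : α) : Prop :=
  a ∣ l ∧ b ∣ l ∧ ∀ e, a ∣ e → b ∣ e → l ∣ e

section LeadingTerm

variable {σ R : Type*} [CommSemiring R] (m : MonomialOrder σ)

theorem lC_ne_zero {f : MvPolynomial σ R} (hf : f ≠ 0) : lC m f ≠ 0 :=
  m.leadingCoeff_ne_zero_iff.mpr hf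

theorem ne_zero_of_map_eq_lC {S F : Type*} [Semiring S] [FunLike F S R] [ZeroHomClass F S R]
    (φ : F) {l : S} {f : MvPolynomial σ R} (hf : f ≠ 0) (hl : φ l = lC m f) : l ≠ 0 := by
  rintro rfl
  exact lC_ne_zero m hf (by rw [← hl, map_zero])

theorem lT_eq_C_mul_monomial (f : MvPolynomial σ R) :
    lT m f = C (lC m f) * monomial (mdeg m f) 1 := by
  rw [lT, C_mul_monomial, mul_one]

end LeadingTerm

theorem mul_cofactor_eq_of_mul_eq {α : Type*} [CommMonoidWithZero α]
    [IsLeftCancelMulZero α] {a b d M u : α}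
    (ha : a ≠ 0) (hdM : d * M = a * b) (hM : M = a * u) : d * u = b :=
  mul_left_cancel₀ ha (by rw [mul_left_comm, ← hM, hdM])

theorem C_mul_sub_eq_lT_mul_sub_lT_mul {σ R : Type*} [CommRing R] (m : MonomialOrder σ)
    {f g : MvPolynomial σ R} {d uf ug : R} (hf : d * ug = lC m f) (hg : d * uf = lC m g) :
    C d * (C uf * monomial (mdeg m g) 1 * f - C ug * monomial (mdeg m f) 1 * g) =
      lT m g * f - lT m f * g := by
  rw [lT_eq_C_mul_monomial, lT_eq_C_mul_monomial, ← hf, ← hg, map_mul, map_mul]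
  ring

theorem coprime_lm_S_polynomial_PQR_general {σ K : Type*} [Field K] (mo : MonomialOrder σ)
    (q : Polynomial K)
    (f g : MvPolynomial σ (Polynomial K ⧸ Ideal.span {q}))
    (hf : f ∉ Set.range (C : (Polynomial K ⧸ Ideal.span {q}) →
      MvPolynomial σ (Polynomial K ⧸ Ideal.span {q})))
    (hg : g ∉ Set.range (C : (Polynomial K ⧸ Ideal.span {q}) →
      MvPolynomial σ (Polynomial K ⧸ Ideal.span {q})))
    (lf lg : Polynomial K)
    (hlf : lf.degree < q.degree ∧ Ideal.Quotient.mk (Ideal.span {q}) lf = lC mo f)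
    (hlg : lg.degree < q.degree ∧ Ideal.Quotient.mk (Ideal.span {q}) lg = lC mo g)
    (d M uf ug : Polynomial K)
    (hdM : d * M = lf * lg)
    (huf : M = lf * uf) (hug : M = lg * ug) :
    C (Ideal.Quotient.mk (Ideal.span {q}) d) *
        (C (Ideal.Quotient.mk (Ideal.span {q}) uf) * monomial (mdeg mo g) 1 * f -
          C (Ideal.Quotient.mk (Ideal.span {q}) ug) * monomial (mdeg mo f) 1 * g) =
      (f - lT mo f) * lT mo g - (g - lT mo g) * lT mo f ∧
    C (Ideal.Quotient.mk (Ideal.span {q}) d) *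
        (C (Ideal.Quotient.mk (Ideal.span {q}) uf) * monomial (mdeg mo g) 1 * f -
          C (Ideal.Quotient.mk (Ideal.span {q}) ug) * monomial (mdeg mo f) 1 * g) =
      (f - lT mo f) * g - (g - lT mo g) * f := by
  have hlf0 : lf ≠ 0 := ne_zero_of_map_eq_lC mo _ (by rintro rfl; exact hf ⟨0, C_0⟩) hlf.2
  have hlg0 : lg ≠ 0 := ne_zero_of_map_eq_lC mo _ (by rintro rfl; exact hg ⟨0, C_0⟩) hlg.2
  have hduf : d * uf = lg := mul_cofactor_eq_of_mul_eq hlf0 hdM huf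
  have hdug : d * ug = lf := mul_cofactor_eq_of_mul_eq hlg0 (hdM.trans (mul_comm _ _)) hug
  have key := C_mul_sub_eq_lT_mul_sub_lT_mul mo (f := f) (g := g)
    (d := Ideal.Quotient.mk _ d) (uf := Ideal.Quotient.mk _ uf) (ug := Ideal.Quotient.mk _ ug)
    (by rw [← map_mul, hdug, hlf.2]) (by rw [← map_mul, hduf, hlg.2])
  exact ⟨by linear_combination key, by linear_combination key⟩

/-- **Coprime leading monomials over a PQR.**  Over `R_q = K[x₁]/⟨q⟩`, for `f, g` not
in `R_q` with relatively prime leading monomials, with canonical lifts `l_f, l_g` of the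
leading coefficients, `d = gcd(l_f, l_g)`, `lcm(l_f,l_g) = l_f·u_f = l_g·u_g`, and
`S(f,g) = σ_q(u_f)·x̃^{lm g}·f − σ_q(u_g)·x̃^{lm f}·g`, one has
`σ_q(d)·S(f,g) = f₁·lt g − g₁·lt f = f₁·g − g₁·f`. -/
theorem coprime_lm_S_polynomial_PQR {σ K : Type*} [Field K] (mo : MonomialOrder σ)
    (q : Polynomial K) (hq : 0 < q.degree)
    (f g : MvPolynomial σ (Polynomial K ⧸ Ideal.span {q}))
    (hf : f ∉ Set.range (C : (Polynomial K ⧸ Ideal.span {q}) →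
      MvPolynomial σ (Polynomial K ⧸ Ideal.span {q})))
    (hg : g ∉ Set.range (C : (Polynomial K ⧸ Ideal.span {q}) →
      MvPolynomial σ (Polynomial K ⧸ Ideal.span {q})))
    (hcop : ∀ i, mdeg mo f i = 0 ∨ mdeg mo g i = 0)
    (lf lg : Polynomial K)
    (hlf : lf.degree < q.degree ∧ Ideal.Quotient.mk (Ideal.span {q}) lf = lC mo f)
    (hlg : lg.degree < q.degree ∧ Ideal.Quotient.mk (Ideal.span {q}) lg = lC mo g)
    (d M uf ug : Polynomial K)
    (hd : IsGcd d lf lg) (hM : IsLcm M lf lg)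
    (hdM : d * M = lf * lg)
    (huf : M = lf * uf) (hug : M = lg * ug) :
    C (Ideal.Quotient.mk (Ideal.span {q}) d) *
        (C (Ideal.Quotient.mk (Ideal.span {q}) uf) * monomial (mdeg mo g) 1 * f -
          C (Ideal.Quotient.mk (Ideal.span {q}) ug) * monomial (mdeg mo f) 1 * g) =
      (f - lT mo f) * lT mo g - (g - lT mo g) * lT mo f ∧
    C (Ideal.Quotient.mk (Ideal.span {q}) d) *
        (C (Ideal.Quotient.mk (Ideal.span {q}) uf) * monomial (mdeg mo g) 1 * f -
          C (Ideal.Quotient.mk (Ideal.span {q}) ug) * monomial (mdeg mo f) 1 * g) =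
      (f - lT mo f) * g - (g - lT mo g) * f :=
  coprime_lm_S_polynomial_PQR_general mo q f g hf hg lf lg hlf hlg d M uf ug hdM huf hug
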